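/- arXiv:1603.08912 — 4 statements merged into one kernel-verified Lean document; each statement's English description precedes it below -/
import Mathlib

section
/- Suppose real numbers M > 0, H ≥ 0, P ≥ 0 and constants C_a > 0, 𝓔_a = (8/27)C_a^{-2}, 𝓚_a = (4/3)C_a^{-1} satisfy: M·((1/2)H² - (1/4)P) ≤ (1-δ)𝓔_a for some δ ∈ (0,1), P ≤ C_a·√M·H³ (Gagliardo–Nirenberg), and √M·H ≤ (1-δ')𝓚_a for the δ' from the continuity lemma. Then (1/6 + δ'/3)H² ≤ (1/2)H² - (1/4)P ≤ (1/2)H². -/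
/-- algebraic coercivity (Proposition 3.4 a.(iii)). With `M = ‖u‖²_{L²}`,
`H = ‖u‖_{Ḣ¹_a}`, `P = ‖u‖⁴_{L⁴}`, if `M((1/2)H² - (1/4)P) ≤ (1-δ)𝓔_a`,
`P ≤ C_a √M H³`, and `√M H ≤ (1-δ')𝓚_a`, then
`(1/6 + δ'/3) H² ≤ (1/2)H² - (1/4)P ≤ (1/2)H²`. -/
theorem stmt_6 (M H P Ca δ δ' : ℝ) (hM : 0 < M) (hH : 0 ≤ H) (hP : 0 ≤ P)
    (hCa : 0 < Ca) (hδ0 : 0 < δ) (hδ1 : δ < 1) (hδ' : 0 < δ')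
    (henergy : M * ((1/2) * H ^ 2 - (1/4) * P) ≤ (1 - δ) * ((8/27) * (Ca ^ 2)⁻¹))
    (hGN : P ≤ Ca * Real.sqrt M * H ^ 3)
    (hbelow : Real.sqrt M * H ≤ (1 - δ') * ((4/3) * Ca⁻¹)) :
    (1/6 + δ'/3) * H ^ 2 ≤ (1/2) * H ^ 2 - (1/4) * P ∧
      (1/2) * H ^ 2 - (1/4) * P ≤ (1/2) * H ^ 2 := by
  have hkey : Ca * (Real.sqrt M * H) * H ^ 2 ≤ Ca * ((1 - δ') * ((4/3) * Ca⁻¹)) * H ^ 2 := by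
    have : 0 ≤ Ca * H ^ 2 := by positivity
    nlinarith [mul_le_mul_of_nonneg_left hbelow (le_of_lt hCa), sq_nonneg H]
  have h2 : Ca * ((1 - δ') * ((4/3) * Ca⁻¹)) * H ^ 2 = (1 - δ') * (4/3) * H ^ 2 := by
    field_simp
  have h3 : P ≤ (1 - δ') * (4/3) * H ^ 2 := by
    calc P ≤ Ca * Real.sqrt M * H ^ 3 := hGN
      _ = Ca * (Real.sqrt M * H) * H ^ 2 := by ring
      _ ≤ _ := hkey
      _ = _ := h2
  constructor <;> nlinarith [sq_nonneg H]
end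

section
/- Suppose real numbers M > 0, H ≥ 0, P ≥ 0 satisfy M((1/2)H² - (1/4)P) ≤ (1-δ)·(8/27)C_a^{-2} for some δ ∈ (0,1), and √M·H ≥ (1+δ')·(4/3)C_a^{-1} for some δ' > 0. Then there exist ε > 0 and c > 0 (depending on δ', C_a, M) such that (1+ε)H² - (3/4)P ≤ -c < 0. -/
/-- algebraic core of Proposition 3.4 b.(ii). With `M = ‖u‖²_{L²}`,
`H = ‖u‖_{Ḣ¹_a}`, `P = ‖u‖⁴_{L⁴}`: if `M((1/2)H² - (1/4)P) ≤ (1-δ)(8/27)C_a⁻²` and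
`√M H ≥ (1+δ')(4/3)C_a⁻¹`, then there exist `ε > 0` and `c > 0` with
`(1+ε)H² - (3/4)P ≤ -c < 0`. -/
theorem stmt_7 (M H P Ca δ δ' : ℝ) (hM : 0 < M) (hH : 0 ≤ H) (hP : 0 ≤ P)
    (hCa : 0 < Ca) (hδ0 : 0 < δ) (hδ1 : δ < 1) (hδ' : 0 < δ')
    (henergy : M * ((1/2) * H ^ 2 - (1/4) * P) ≤ (1 - δ) * ((8/27) * (Ca ^ 2)⁻¹))
    (habove : (1 + δ') * ((4/3) * Ca⁻¹) ≤ Real.sqrt M * H) :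
    ∃ ε : ℝ, 0 < ε ∧ ∃ c : ℝ, 0 < c ∧ (1 + ε) * H ^ 2 - (3/4) * P ≤ -c := by
  have hCa2 : (0:ℝ) < (Ca ^ 2)⁻¹ := by positivity
  have hsq : Real.sqrt M ^ 2 = M := Real.sq_sqrt hM.le
  have hMH2 : (1 + δ') ^ 2 * ((16/9) * (Ca ^ 2)⁻¹) ≤ M * H ^ 2 := by
    have h0 : (0:ℝ) ≤ (1 + δ') * ((4/3) * Ca⁻¹) := by positivity
    have := mul_self_le_mul_self h0 habove
    have hinv : Ca⁻¹ * Ca⁻¹ = (Ca ^ 2)⁻¹ := by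
      rw [← mul_inv]; ring_nf
    nlinarith [hsq]
  set ε := δ' * (2 + δ') / (4 * (1 + δ') ^ 2) with hεdef
  have hεpos : 0 < ε := by positivity
  have hεrel : ε * (4 * (1 + δ') ^ 2) = δ' * (2 + δ') := by
    rw [hεdef]; field_simp
  refine ⟨ε, hεpos, (4/9) * (Ca ^ 2)⁻¹ * (2 * δ' + δ' ^ 2) / M, by positivity, ?_⟩
  rw [neg_div', le_div_iff₀ hM]
  have hhalf : ε ≤ 1/2 := by
    rw [hεdef, div_le_iff₀ (by positivity)]; nlinarith [sq_nonneg δ']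
  nlinarith [hεrel, mul_nonneg (by linarith : (0:ℝ) ≤ 1/2 - ε) (sub_nonneg.2 hMH2),
    mul_nonneg hCa2.le hδ0.le, sq_nonneg δ']
end

section
/- For a ≥ -1/4 and a < 0, letting C_a and C_0 denote the sharp constants in ‖f‖_{L⁴}⁴ ≤ C ‖f‖_{L²}‖f‖_{Ḣ¹_a}³ respectively with a and with a = 0, one has C_0 < C_a, and consequently 𝓔_a = (8/27)C_a^{-2} < 𝓔_0 and 𝓚_a = (4/3)C_a^{-1} < 𝓚_0. -/
open MeasureTheory Filter
open scoped Topology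

noncomputable section

abbrev E3 := EuclideanSpace ℝ (Fin 3)

/-- for `-1/4 ≤ a < 0`, if `C_0` is the sharp Gagliardo–Nirenberg constant
for `a = 0`, attained by a ground state `Q₀`, and `C_a` is any constant valid for the
inequality with the `Ḣ¹_a` norm, then `C_0 < C_a`, and consequently
`(8/27)C_a⁻² < (8/27)C_0⁻²` and `(4/3)C_a⁻¹ < (4/3)C_0⁻¹`. -/
theorem stmt_8 (a : ℝ) (ha : -1/4 ≤ a) (ha0 : a < 0) (Ca C0 : ℝ) (hC0 : 0 < C0)
    (Q₀ : E3 → ℂ) (hQdiff : Differentiable ℝ Q₀)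
    (hint2 : Integrable (fun x => ‖Q₀ x‖ ^ 2))
    (hint4 : Integrable (fun x => ‖Q₀ x‖ ^ 4))
    (hgint : Integrable (fun x => ‖fderiv ℝ Q₀ x‖ ^ 2))
    (hpint : Integrable (fun x : E3 => ‖Q₀ x‖ ^ 2 / ‖x‖ ^ 2))
    (hm : 0 < ∫ x : E3, ‖Q₀ x‖ ^ 2)
    (hpot : 0 < ∫ x : E3, ‖Q₀ x‖ ^ 2 / ‖x‖ ^ 2)
    (hGa : 0 < ∫ x : E3, ‖fderiv ℝ Q₀ x‖ ^ 2 + (a / ‖x‖ ^ 2) * ‖Q₀ x‖ ^ 2)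
    (hattain : (∫ x : E3, ‖Q₀ x‖ ^ 4) =
      C0 * (∫ x : E3, ‖Q₀ x‖ ^ 2) ^ ((1 : ℝ)/2) * (∫ x : E3, ‖fderiv ℝ Q₀ x‖ ^ 2) ^ ((3 : ℝ)/2))
    (hub : (∫ x : E3, ‖Q₀ x‖ ^ 4) ≤
      Ca * (∫ x : E3, ‖Q₀ x‖ ^ 2) ^ ((1 : ℝ)/2) *
        (∫ x : E3, ‖fderiv ℝ Q₀ x‖ ^ 2 + (a / ‖x‖ ^ 2) * ‖Q₀ x‖ ^ 2) ^ ((3 : ℝ)/2)) :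
    C0 < Ca ∧ (8/27) * (Ca ^ 2)⁻¹ < (8/27) * (C0 ^ 2)⁻¹ ∧
      (4/3) * Ca⁻¹ < (4/3) * C0⁻¹ := by
  set M := ∫ x : E3, ‖Q₀ x‖ ^ 2
  set G0 := ∫ x : E3, ‖fderiv ℝ Q₀ x‖ ^ 2
  set P := ∫ x : E3, ‖Q₀ x‖ ^ 2 / ‖x‖ ^ 2
  set Ga := ∫ x : E3, ‖fderiv ℝ Q₀ x‖ ^ 2 + (a / ‖x‖ ^ 2) * ‖Q₀ x‖ ^ 2
  have hsplit : Ga = G0 + a * P := by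
    have : Ga = ∫ x : E3, ‖fderiv ℝ Q₀ x‖ ^ 2 + a * (‖Q₀ x‖ ^ 2 / ‖x‖ ^ 2) := by
      apply integral_congr_ae
      filter_upwards with x
      ring
    rw [this, integral_add hgint (hpint.const_mul a), MeasureTheory.integral_const_mul]
  have hGlt : Ga < G0 := by
    rw [hsplit]
    nlinarith [mul_pos (neg_pos.2 ha0) hpot]
  have hG0 : 0 < G0 := lt_trans hGa hGlt
  have hpow : Ga ^ ((3:ℝ)/2) < G0 ^ ((3:ℝ)/2) :=
    Real.rpow_lt_rpow (le_of_lt hGa) hGlt (by norm_num)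
  have hpowGa : 0 < Ga ^ ((3:ℝ)/2) := Real.rpow_pos_of_pos hGa _
  have hpowM : 0 < M ^ ((1:ℝ)/2) := Real.rpow_pos_of_pos hm _
  have key : C0 * M ^ ((1:ℝ)/2) * G0 ^ ((3:ℝ)/2) ≤ Ca * M ^ ((1:ℝ)/2) * Ga ^ ((3:ℝ)/2) := by
    rw [← hattain]; exact hub
  have hCalt : C0 < Ca := by
    by_contra h
    push_neg at h
    have h1 : Ca * M ^ ((1:ℝ)/2) * Ga ^ ((3:ℝ)/2) ≤ C0 * M ^ ((1:ℝ)/2) * Ga ^ ((3:ℝ)/2) := by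
      have := mul_le_mul_of_nonneg_right (mul_le_mul_of_nonneg_right h hpowM.le) hpowGa.le
      linarith
    have h2 : C0 * M ^ ((1:ℝ)/2) * Ga ^ ((3:ℝ)/2) < C0 * M ^ ((1:ℝ)/2) * G0 ^ ((3:ℝ)/2) := by
      exact mul_lt_mul_of_pos_left hpow (mul_pos hC0 hpowM)
    linarith
  have hCa : 0 < Ca := lt_trans hC0 hCalt
  refine ⟨hCalt, ?_, ?_⟩
  · have : C0 ^ 2 < Ca ^ 2 := by nlinarith
    have := inv_strictAnti₀ (by positivity) this
    linarith
  · have := inv_strictAnti₀ hC0 hCalt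
    linarith
end
end

section
/- Let 0 < s < 2 and let (e^{-tL})_{t>0} be a semigroup on L²(ℝ³) whose kernel satisfies the two-sided Gaussian-type bounds of Lemma 2.1 with parameter σ < 3/2. Then ‖(e^{-L/N²} - e^{-4L/N²})δ₀‖_{L²(ℝ³)} ≲ N^{3/2} for all N ∈ 2^ℤ, where δ₀ is the Dirac mass at the origin. -/
open MeasureTheory Filter
open scoped Topology

noncomputable section

/-!
Pointwise `|a - b|² ≤ 2a² + 2b²`, so it suffices to bound the `L²` norm of the Gaussian upper
bound at a single time `t`. The parabolic scaling `x = √t • y` shows that this squared norm is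
`t^{-3/2}` times its value at `t = 1`, which is finite because `|y|^{-2σ} e^{-2|y|²/c}` is
integrable on `ℝ³` as soon as `2σ < 3`. At `t = 1/N²` and `t = 4/N²` this gives `≲ N³`.
-/

open Set Real Module

section
variable {E : Type*} [NormedAddCommGroup E] [NormedSpace ℝ E] [Nontrivial E]
  [FiniteDimensional ℝ E] [MeasurableSpace E] [BorelSpace E] (μ : Measure E) [μ.IsAddHaarMeasure]

theorem integrable_norm_rpow_mul_exp_neg_mul_sq {s b : ℝ} (hb : 0 < b)
    (hs : -(finrank ℝ E : ℝ) < s) :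
    Integrable (fun x : E => ‖x‖ ^ s * exp (-b * ‖x‖ ^ 2)) μ := by
  rw [integrable_fun_norm_addHaar μ (f := fun r => r ^ s * exp (-b * r ^ 2))]
  have hdim : ((finrank ℝ E - 1 : ℕ) : ℝ) = finrank ℝ E - 1 := by
    rw [Nat.cast_sub finrank_pos, Nat.cast_one]
  refine (integrableOn_rpow_mul_exp_neg_mul_sq hb (s := ((finrank ℝ E - 1 : ℕ) : ℝ) + s)
    (by linarith)).congr_fun (fun r hr => ?_) measurableSet_Ioi
  simp only [smul_eq_mul, rpow_add hr, rpow_natCast, mul_assoc]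

theorem integrable_max_one_inv_norm_rpow_mul_exp_neg_mul_sq {s b : ℝ} (hb : 0 < b)
    (hs : s < finrank ℝ E) :
    Integrable (fun x : E => max 1 ‖x‖⁻¹ ^ s * exp (-b * ‖x‖ ^ 2)) μ := by
  have hdom : Integrable (fun x : E => ‖x‖ ^ (0 : ℝ) * exp (-b * ‖x‖ ^ 2)
      + ‖x‖ ^ (-s) * exp (-b * ‖x‖ ^ 2)) μ :=
    (integrable_norm_rpow_mul_exp_neg_mul_sq μ hb (by simp [finrank_pos])).add
      (integrable_norm_rpow_mul_exp_neg_mul_sq μ hb (by linarith))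
  refine hdom.mono' (by fun_prop) (Eventually.of_forall fun x => ?_)
  have hmax : max 1 ‖x‖⁻¹ ^ s ≤ 1 + ‖x‖ ^ (-s) := by
    rw [rpow_neg (norm_nonneg x), ← inv_rpow (norm_nonneg x)]
    rcases max_choice 1 ‖x‖⁻¹ with h | h <;> rw [h]
    · simp [rpow_nonneg (inv_nonneg.2 (norm_nonneg x))]
    · simp
  rw [norm_of_nonneg (by positivity), rpow_zero, ← add_mul]
  exact mul_le_mul_of_nonneg_right hmax (exp_pos _).le

end

def heatKernelBound (σ C c t : ℝ) (x : E3) : ℝ :=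
  C * (max 1 (√t / ‖x‖)) ^ σ * t ^ (-(3 : ℝ) / 2) * exp (-‖x‖ ^ 2 / (c * t))

section HeatKernelBound

variable {σ C c t : ℝ}

theorem heatKernelBound_scaling (ht : 0 < t) (x : E3) :
    heatKernelBound σ C c t x = t ^ (-(3 : ℝ) / 2) * heatKernelBound σ C c 1 ((√t)⁻¹ • x) := by
  have hnorm : ‖(√t)⁻¹ • x‖ = ‖x‖ / √t := by
    rw [norm_smul, norm_inv, norm_of_nonneg (sqrt_nonneg t), inv_mul_eq_div]
  simp only [heatKernelBound, hnorm, sqrt_one, one_rpow, mul_one, div_pow, sq_sqrt ht.le,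
    one_div_div]
  rw [show -‖x‖ ^ 2 / (c * t) = -(‖x‖ ^ 2 / t) / c by ring]
  ring

theorem sq_heatKernelBound_one (x : E3) :
    heatKernelBound σ C c 1 x ^ 2 = C ^ 2 * (max 1 ‖x‖⁻¹ ^ (2 * σ) * exp (-(2 / c) * ‖x‖ ^ 2)) := by
  have hmax : 0 ≤ max 1 ‖x‖⁻¹ := le_max_of_le_left zero_le_one
  simp only [heatKernelBound, sqrt_one, one_div, one_rpow, mul_one]
  rw [mul_comm 2 σ, rpow_mul hmax, rpow_two, mul_pow, mul_pow, ← exp_nat_mul]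
  push_cast
  ring_nf

theorem integrable_sq_heatKernelBound_one (hσ : σ < 3 / 2) (hc : 0 < c) :
    Integrable (fun x : E3 => heatKernelBound σ C c 1 x ^ 2) := by
  simp only [sq_heatKernelBound_one]
  refine (integrable_max_one_inv_norm_rpow_mul_exp_neg_mul_sq volume (by positivity) ?_).const_mul _
  rw [finrank_euclideanSpace_fin]
  push_cast
  linarith

theorem integrable_sq_heatKernelBound (hσ : σ < 3 / 2) (hc : 0 < c) (ht : 0 < t) :
    Integrable (fun x : E3 => heatKernelBound σ C c t x ^ 2) := by
  simp only [heatKernelBound_scaling ht, mul_pow]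
  exact ((integrable_sq_heatKernelBound_one hσ hc).comp_smul (by positivity)).const_mul _

theorem integral_sq_heatKernelBound (ht : 0 < t) :
    ∫ x : E3, heatKernelBound σ C c t x ^ 2 =
      t ^ (-(3 : ℝ) / 2) * ∫ x : E3, heatKernelBound σ C c 1 x ^ 2 := by
  simp only [heatKernelBound_scaling ht, mul_pow]
  rw [integral_const_mul, Measure.integral_comp_inv_smul_of_nonneg volume
    (fun y => heatKernelBound σ C c 1 y ^ 2) (sqrt_nonneg t), finrank_euclideanSpace_fin,
    smul_eq_mul, ← mul_assoc]
  congr 1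
  rw [sqrt_eq_rpow, ← rpow_natCast, ← rpow_natCast, ← rpow_mul ht.le, ← rpow_mul ht.le,
    ← rpow_add ht]
  norm_num

end HeatKernelBound

theorem integral_sq_abs_sub_le {α : Type*} [MeasurableSpace α] {μ : Measure α}
    {f g F G : α → ℝ} (hF : Integrable (fun x => F x ^ 2) μ) (hG : Integrable (fun x => G x ^ 2) μ)
    (hf : ∀ᵐ x ∂μ, |f x| ≤ F x) (hg : ∀ᵐ x ∂μ, |g x| ≤ G x) :
    ∫ x, |f x - g x| ^ 2 ∂μ ≤ 2 * (∫ x, F x ^ 2 ∂μ + ∫ x, G x ^ 2 ∂μ) := by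
  rw [← integral_add hF hG, ← integral_const_mul]
  refine integral_mono_of_nonneg (ae_of_all _ fun x => by positivity)
    ((hF.add hG).const_mul 2) ?_
  filter_upwards [hf, hg] with x hfx hgx
  have hf2 : f x ^ 2 ≤ F x ^ 2 := by simpa only [sq_abs] using pow_le_pow_left₀ (abs_nonneg _) hfx 2
  have hg2 : g x ^ 2 ≤ G x ^ 2 := by simpa only [sq_abs] using pow_le_pow_left₀ (abs_nonneg _) hgx 2
  rw [sq_abs]
  nlinarith [sq_nonneg (f x + g x)]

theorem div_sq_rpow_neg_three_halves_le {k N : ℝ} (hk : 1 ≤ k) (hN : 0 < N) :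
    (k / N ^ 2) ^ (-(3 : ℝ) / 2) ≤ N ^ (3 : ℝ) :=
  calc (k / N ^ 2) ^ (-(3 : ℝ) / 2) ≤ (1 / N ^ 2) ^ (-(3 : ℝ) / 2) :=
        rpow_le_rpow_of_nonpos (by positivity) (by gcongr) (by norm_num)
    _ = N ^ (3 : ℝ) := by
        rw [one_div, inv_rpow (by positivity), ← rpow_natCast, ← rpow_mul hN.le, ← rpow_neg hN.le]
        norm_num

theorem stmt_16_general (σ C c : ℝ)
    (hσ' : σ < 3/2) (hc : 0 < c)
    (p : ℝ → E3 → E3 → ℝ)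
    (hbound : ∀ t : ℝ, 0 < t → ∀ x : E3, x ≠ 0 →
      |p t x 0| ≤ C * (max 1 (Real.sqrt t / ‖x‖)) ^ σ * t ^ (-(3 : ℝ)/2) *
        Real.exp (-‖x‖ ^ 2 / (c * t))) :
    ∃ C' : ℝ, 0 < C' ∧ ∀ N : ℝ, 0 < N →
      (∫ x : E3, |p (1 / N ^ 2) x 0 - p (4 / N ^ 2) x 0| ^ 2) ^ ((1 : ℝ)/2) ≤
        C' * N ^ ((3 : ℝ)/2) := by
  set K := ∫ x : E3, heatKernelBound σ C c 1 x ^ 2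
  have hK : 0 ≤ K := integral_nonneg fun x => sq_nonneg _
  refine ⟨(4 * K + 1) ^ ((1 : ℝ) / 2), by positivity, fun N hN => ?_⟩
  have ht₁ : 0 < 1 / N ^ 2 := by positivity
  have ht₂ : 0 < 4 / N ^ 2 := by positivity
  have hbound_ae : ∀ t, 0 < t → ∀ᵐ x : E3, |p t x 0| ≤ heatKernelBound σ C c t x :=
    fun t ht => (Measure.ae_ne volume 0).mono (hbound t ht)
  have hdecay₁ := div_sq_rpow_neg_three_halves_le le_rfl hN
  have hdecay₂ := div_sq_rpow_neg_three_halves_le (by norm_num : (1 : ℝ) ≤ 4) hN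
  have hL2 : ∫ x : E3, |p (1 / N ^ 2) x 0 - p (4 / N ^ 2) x 0| ^ 2 ≤ (4 * K + 1) * N ^ (3 : ℝ) :=
    calc _ ≤ 2 * ((∫ x : E3, heatKernelBound σ C c (1 / N ^ 2) x ^ 2)
              + ∫ x : E3, heatKernelBound σ C c (4 / N ^ 2) x ^ 2) :=
          integral_sq_abs_sub_le (integrable_sq_heatKernelBound hσ' hc ht₁)
            (integrable_sq_heatKernelBound hσ' hc ht₂) (hbound_ae _ ht₁) (hbound_ae _ ht₂)
      _ = 2 * ((1 / N ^ 2) ^ (-(3 : ℝ) / 2) * K + (4 / N ^ 2) ^ (-(3 : ℝ) / 2) * K) := by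
          rw [integral_sq_heatKernelBound ht₁, integral_sq_heatKernelBound ht₂]
      _ ≤ (4 * K + 1) * N ^ (3 : ℝ) := by
          nlinarith [mul_le_mul_of_nonneg_right hdecay₁ hK, mul_le_mul_of_nonneg_right hdecay₂ hK,
            rpow_nonneg hN.le (3 : ℝ)]
  calc _ ≤ ((4 * K + 1) * N ^ (3 : ℝ)) ^ ((1 : ℝ) / 2) :=
        rpow_le_rpow (integral_nonneg fun x => by positivity) hL2 (by norm_num)
    _ = (4 * K + 1) ^ ((1 : ℝ) / 2) * N ^ ((3 : ℝ) / 2) := by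
        rw [mul_rpow (by positivity) (by positivity), ← rpow_mul hN.le]
        norm_num

/-- if the heat kernel `p(t,x,y)` of `L = -Δ + a/|x|²` obeys the upper bound
of Lemma 2.1 with parameter `σ < 3/2`, then the Littlewood–Paley piece of the Dirac delta,
`(e^{-L/N²} - e^{-4L/N²})δ₀`, has `L²` norm `≲ N^{3/2}` for every `N > 0`. -/
theorem stmt_16 (a σ C c : ℝ) (ha : -1/4 < a) (hσ : σ = 1/2 - Real.sqrt (1/4 + a))
    (hσ' : σ < 3/2) (hC : 0 < C) (hc : 0 < c)
    (p : ℝ → E3 → E3 → ℝ)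
    (hmeas : ∀ t : ℝ, Measurable (fun x : E3 => p t x 0))
    (hbound : ∀ t : ℝ, 0 < t → ∀ x : E3, x ≠ 0 →
      |p t x 0| ≤ C * (max 1 (Real.sqrt t / ‖x‖)) ^ σ * t ^ (-(3 : ℝ)/2) *
        Real.exp (-‖x‖ ^ 2 / (c * t))) :
    ∃ C' : ℝ, 0 < C' ∧ ∀ N : ℝ, 0 < N →
      (∫ x : E3, |p (1 / N ^ 2) x 0 - p (4 / N ^ 2) x 0| ^ 2) ^ ((1 : ℝ)/2) ≤
        C' * N ^ ((3 : ℝ)/2) :=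
  stmt_16_general σ C c hσ' hc p hbound
end
end
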